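/- Write F[a_1,…,a_n] for the F-polynomial F_{p/q} when p/q = [a_1,…,a_n], with N = a_1 + ⋯ + a_n − 1 and l_k = a_1 + ⋯ + a_k. Then: (i) F[a_1,…,a_{n−1}, a_n − 1, 1] = F[a_1,…,a_n]; and (ii) if a_n ≥ 2, F[a_1,…,a_n] = F[a_1,…,a_{n−1}] + y_N · F[a_1,…,a_{n−1}, a_n − 1] if n is odd, and F[a_1,…,a_n] = (Π_{i=l_{n−1}}^{N} y_i) · F[a_1,…,a_{n−1}] + F[a_1,…,a_{n−1}, a_n − 1] if n is even. -/

import Mathlib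

/-!
Ancestral triangles of continued fractions (Yamada / Farey diagrams),
following "Cluster variables and Alexander polynomials of 2-bridge knots".
-/

noncomputable section

open scoped BigOperators

attribute [local instance] Classical.propDecidable

namespace TwoBridge

/-- The continued fraction `[a₁,…,aₙ] = 1/(a₁ + 1/(a₂ + ⋯ + 1/aₙ))`. -/
def cf : List ℕ → ℚ
  | [] => 0
  | a :: t => 1 / ((a : ℚ) + cf t)

/-- Partial sums `l_k = a₁ + ⋯ + a_k`. -/
def ell (a : List ℕ) (k : ℕ) : ℕ := (a.take k).sum

/-- The index of the fan containing the `i`-th triangle (1-based): the least `k` with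
`i ≤ l_k − 1`.  Fan 1 consists of `T_1, …, T_{a₁−1}` and, for `k ≥ 2`, fan `k` consists of
`T_{l_{k−1}}, …, T_{l_k − 1}`. -/
def fanIdx (a : List ℕ) (i : ℕ) : ℕ := sInf {k | i < ell a k}

/-- The `i`-th triangle (1-based) of the ancestral triangle of `[a₁,…,aₙ]` is a *right*
triangle iff it lies in an odd-indexed fan (first `a₁ − 1` triangles are right, the next
`a₂` left, the next `a₃` right, and so on alternately). -/
def isRight (a : List ℕ) (i : ℕ) : Prop := Odd (fanIdx a i)

/-- Vertex indices of the ancestral triangle: `0 ↦ 0/1`, `1 ↦ 1/1`, and `j + 1 ↦` the apex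
(new vertex) of the triangle `T_j`.  `edgeIdx a i` is the pair of vertex indices
(left endpoint, right endpoint) of the most recently created edge after stacking `i`
triangles; the triangle `T_{i+1}` is stacked on this edge. -/
def edgeIdx (a : List ℕ) : ℕ → ℕ × ℕ
  | 0 => (0, 1)
  | i + 1 => if isRight a (i + 1) then ((edgeIdx a i).1, i + 2) else (i + 2, (edgeIdx a i).2)

/-- The labels (numerator, denominator) of the endpoints of the active edge after stacking
`i` triangles; the new vertex of each triangle is labelled by the mediant of the two
endpoints of the edge it is stacked on. -/
def edgeLbl (a : List ℕ) : ℕ → (ℕ × ℕ) × (ℕ × ℕ)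
  | 0 => ((0, 1), (1, 1))
  | i + 1 =>
      if isRight a (i + 1) then
        ((edgeLbl a i).1,
          ((edgeLbl a i).1.1 + (edgeLbl a i).2.1, (edgeLbl a i).1.2 + (edgeLbl a i).2.2))
      else
        (((edgeLbl a i).1.1 + (edgeLbl a i).2.1, (edgeLbl a i).1.2 + (edgeLbl a i).2.2),
          (edgeLbl a i).2)

/-- The label (numerator, denominator) of the vertex with index `v`. -/
def vtxLabel (a : List ℕ) (v : ℕ) : ℕ × ℕ :=
  if v = 0 then (0, 1)
  else if v = 1 then (1, 1)
  else ((edgeLbl a (v - 2)).1.1 + (edgeLbl a (v - 2)).2.1,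
        (edgeLbl a (v - 2)).1.2 + (edgeLbl a (v - 2)).2.2)

/-- `u` and `w` are joined by an edge of the ancestral triangle. -/
def IsEdgeAT (a : List ℕ) (u w : ℕ) : Prop :=
  (u = 0 ∧ w = 1) ∨ (u = 1 ∧ w = 0) ∨
    (2 ≤ u ∧ (w = (edgeIdx a (u - 2)).1 ∨ w = (edgeIdx a (u - 2)).2)) ∨
    (2 ≤ w ∧ (u = (edgeIdx a (w - 2)).1 ∨ u = (edgeIdx a (w - 2)).2))

/-- A step of a path: an edge of the ancestral triangle along which the denominator of the
vertex label strictly decreases. -/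
def IsStep (a : List ℕ) (u w : ℕ) : Prop :=
  IsEdgeAT a u w ∧ (vtxLabel a w).2 < (vtxLabel a u).2

/-- `IsPathFrom a s γ` : `γ` is a path of the ancestral triangle of `a` starting at the
vertex with index `s` and ending at `0/1` or `1/1`, the denominator of the label strictly
decreasing along every edge. -/
def IsPathFrom (a : List ℕ) (s : ℕ) (γ : List ℕ) : Prop :=
  γ.head? = some s ∧ (γ.getLast? = some 0 ∨ γ.getLast? = some 1) ∧ List.Chain' (IsStep a) γ

/-- The (indices of the) triangles cut off to the left of the path by a single step from
vertex `u` down to vertex `w`. -/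
def stepLeft (a : List ℕ) (u w : ℕ) : Finset ℕ :=
  if 2 ≤ u ∧ w = (edgeIdx a (u - 2)).2 then Finset.Ioc (w - 1) (u - 1) else ∅

/-- The set `S_γ` of (indices of) triangles lying on the left side of the path `γ`. -/
def pathLeftSet (a : List ℕ) (γ : List ℕ) : Finset ℕ :=
  (γ.zip γ.tail).foldr (fun p s => stepLeft a p.1 p.2 ∪ s) ∅


/-- The `F`-polynomial `F_{p/q} = Σ_{γ ∈ Γ_{p/q}} ∏_{T_i ∈ S_γ} y_i` of `p/q = [a₁,…,aₙ]`
(the variable `y_i` is `MvPolynomial.X i`; the top vertex has index `a.sum = N + 1`).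
For the empty continued fraction this gives `1`. -/
def Fpoly (a : List ℕ) : MvPolynomial ℕ ℤ :=
  ∑ᶠ γ ∈ {γ : List ℕ | IsPathFrom a a.sum γ},
    ∏ i ∈ pathLeftSet a γ, (MvPolynomial.X i : MvPolynomial ℕ ℤ)

/-- `F`-polynomial with the convention `F[a₁,…,a_{n−1},0] = F[a₁,…,a_{n−2}]`. -/
def FpolyC (l : List ℕ) : MvPolynomial ℕ ℤ :=
  if l.getLast? = some 0 then Fpoly l.dropLast.dropLast else Fpoly l

/-!
A path from a vertex `s ≥ 2` first steps to an endpoint of the edge on which the triangle with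
apex `s` was stacked. A step to the left endpoint cuts off no triangle; a step to the right
endpoint `w` cuts off `T_w, …, T_{s-1}`. Hence `F_s = F_left + (∏_{w ≤ i < s} y_i) F_w`, and
`F_s` only depends on the directions of the first `s - 2` triangles. All triangles of the last
fan of `[a₁,…,aₙ]` point the same way, so the edge under the top vertex joins `l_{n-1}` and
`N`, and the polynomials of these two vertices are `F[a₁,…,a_{n-1}]` and `F[a₁,…,aₙ - 1]`.
For (i), note that `[…, aₙ - 1, 1]` and `[…, aₙ]` have the same first `N - 1` triangles.
-/

open MvPolynomial

lemma edgeIdx_le (a : List ℕ) (i : ℕ) :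
    (edgeIdx a i).1 ≤ i + 1 ∧ (edgeIdx a i).2 ≤ i + 1 := by
  induction i with
  | zero => simp [edgeIdx]
  | succ n ih =>
    rw [edgeIdx]
    split <;> constructor <;> simp <;> omega

lemma edgeIdx_fst_ne_snd (a : List ℕ) (i : ℕ) : (edgeIdx a i).1 ≠ (edgeIdx a i).2 := by
  induction i with
  | zero => simp [edgeIdx]
  | succ n ih =>
    have := edgeIdx_le a n
    rw [edgeIdx]
    split <;> simp <;> omega

lemma edgeLbl_denom_pos (a : List ℕ) (i : ℕ) :
    0 < (edgeLbl a i).1.2 ∧ 0 < (edgeLbl a i).2.2 := by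
  induction i with
  | zero => simp [edgeLbl]
  | succ n ih =>
    rw [edgeLbl]
    split <;> simp <;> omega

lemma vtxLabel_add_two (a : List ℕ) (v : ℕ) : vtxLabel a (v + 2) =
    ((edgeLbl a v).1.1 + (edgeLbl a v).2.1, (edgeLbl a v).1.2 + (edgeLbl a v).2.2) := by
  simp [vtxLabel]

lemma vtxLabel_edgeIdx (a : List ℕ) (i : ℕ) :
    vtxLabel a (edgeIdx a i).1 = (edgeLbl a i).1 ∧
      vtxLabel a (edgeIdx a i).2 = (edgeLbl a i).2 := by
  induction i with
  | zero => simp [edgeIdx, edgeLbl, vtxLabel]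
  | succ n ih =>
    rw [edgeIdx, edgeLbl]
    split
    · exact ⟨ih.1, vtxLabel_add_two a n⟩
    · exact ⟨vtxLabel_add_two a n, ih.2⟩

lemma vtxLabel_denom_lt_apex (a : List ℕ) (k u : ℕ)
    (hu : u = (edgeIdx a k).1 ∨ u = (edgeIdx a k).2) :
    (vtxLabel a u).2 < (vtxLabel a (k + 2)).2 := by
  obtain ⟨h1, h2⟩ := vtxLabel_edgeIdx a k
  have := edgeLbl_denom_pos a k
  rw [vtxLabel_add_two]
  rcases hu with rfl | rfl
  · rw [h1]; omega
  · rw [h2]; omega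

lemma isStep_iff (a : List ℕ) (u w : ℕ) :
    IsStep a u w ↔ 2 ≤ u ∧ (w = (edgeIdx a (u - 2)).1 ∨ w = (edgeIdx a (u - 2)).2) := by
  constructor
  · rintro ⟨⟨rfl, rfl⟩ | ⟨rfl, rfl⟩ | hdown | ⟨hw, hup⟩, hlt⟩
    · simp [vtxLabel] at hlt
    · simp [vtxLabel] at hlt
    · exact hdown
    · obtain ⟨k, rfl⟩ : ∃ k, w = k + 2 := ⟨w - 2, by omega⟩
      have := vtxLabel_denom_lt_apex a k u (by simpa using hup)
      omega
  · rintro ⟨hu, hw⟩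
    obtain ⟨k, rfl⟩ : ∃ k, u = k + 2 := ⟨u - 2, by omega⟩
    simp only [Nat.add_sub_cancel] at hw
    exact ⟨Or.inr (Or.inr (Or.inl ⟨hu, by simpa using hw⟩)),
      vtxLabel_denom_lt_apex a k w hw⟩

section Paths

variable {a : List ℕ} {s : ℕ} {γ : List ℕ}

lemma IsPathFrom.exists_eq_cons (h : IsPathFrom a s γ) : ∃ t, γ = s :: t := by
  obtain ⟨hhead, -, -⟩ := h
  cases γ with
  | nil => simp at hhead
  | cons x t =>
    rw [List.head?_cons, Option.some.injEq] at hhead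
    exact ⟨t, by rw [hhead]⟩

lemma isPathFrom_cons_cons {w : ℕ} {t : List ℕ} :
    IsPathFrom a s (s :: w :: t) ↔ IsStep a s w ∧ IsPathFrom a w (w :: t) := by
  rw [IsPathFrom, IsPathFrom, List.getLast?_cons_cons]
  constructor
  · rintro ⟨-, hlast, hchain⟩
    exact ⟨(List.isChain_cons_cons.1 hchain).1, rfl, hlast, (List.isChain_cons_cons.1 hchain).2⟩
  · rintro ⟨hstep, -, hlast, hchain⟩
    exact ⟨rfl, hlast, List.isChain_cons_cons.2 ⟨hstep, hchain⟩⟩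

lemma isPathFrom_iff_of_le_one (hs : s ≤ 1) : IsPathFrom a s γ ↔ γ = [s] := by
  constructor
  · intro h
    obtain ⟨t, rfl⟩ := h.exists_eq_cons
    cases t with
    | nil => rfl
    | cons w t =>
      have := ((isStep_iff a s w).1 (isPathFrom_cons_cons.1 h).1).1
      omega
  · rintro rfl
    refine ⟨rfl, ?_, List.isChain_singleton _⟩
    interval_cases s <;> simp

lemma setOf_isPathFrom_of_two_le (hs : 2 ≤ s) :
    {γ | IsPathFrom a s γ} = List.cons s '' ({γ | IsPathFrom a (edgeIdx a (s - 2)).1 γ} ∪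
      {γ | IsPathFrom a (edgeIdx a (s - 2)).2 γ}) := by
  ext γ
  simp only [Set.mem_ofPred_eq, Set.mem_image, Set.mem_union]
  constructor
  · intro h
    obtain ⟨t, rfl⟩ := h.exists_eq_cons
    cases t with
    | nil => rcases h.2.1 with h' | h' <;> simp at h' <;> omega
    | cons w t =>
      obtain ⟨hstep, hpath⟩ := isPathFrom_cons_cons.1 h
      rcases ((isStep_iff a s w).1 hstep).2 with rfl | rfl
      exacts [⟨_, Or.inl hpath, rfl⟩, ⟨_, Or.inr hpath, rfl⟩]
  · rintro ⟨δ, hδ, rfl⟩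
    rcases hδ with hδ | hδ <;> obtain ⟨t, rfl⟩ := hδ.exists_eq_cons
    · exact isPathFrom_cons_cons.2 ⟨(isStep_iff a s _).2 ⟨hs, Or.inl rfl⟩, hδ⟩
    · exact isPathFrom_cons_cons.2 ⟨(isStep_iff a s _).2 ⟨hs, Or.inr rfl⟩, hδ⟩

variable (a) in
lemma setOf_isPathFrom_finite (s : ℕ) : {γ | IsPathFrom a s γ}.Finite := by
  induction s using Nat.strong_induction_on with
  | _ s ih =>
    rcases le_or_gt s 1 with hs | hs
    · simp [isPathFrom_iff_of_le_one hs]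
    · have := edgeIdx_le a (s - 2)
      rw [setOf_isPathFrom_of_two_le hs]
      exact ((ih _ (by omega)).union (ih _ (by omega))).image _

lemma pathLeftSet_cons_cons (a : List ℕ) (u w : ℕ) (t : List ℕ) :
    pathLeftSet a (u :: w :: t) = stepLeft a u w ∪ pathLeftSet a (w :: t) := rfl

lemma stepLeft_subset_Ioc (a : List ℕ) (u w : ℕ) :
    stepLeft a u w ⊆ Finset.Ioc (w - 1) (u - 1) := by
  unfold stepLeft
  split_ifs
  exacts [subset_rfl, Finset.empty_subset _]

lemma pathLeftSet_subset_range (h : IsPathFrom a s γ) : pathLeftSet a γ ⊆ Finset.range s := by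
  induction s using Nat.strong_induction_on generalizing γ with
  | _ s ih =>
    rcases le_or_gt s 1 with hs | hs
    · rw [(isPathFrom_iff_of_le_one hs).1 h]
      exact Finset.empty_subset _
    · have hmem : γ ∈ {γ | IsPathFrom a s γ} := h
      rw [setOf_isPathFrom_of_two_le hs] at hmem
      obtain ⟨δ, hδ, rfl⟩ := hmem
      obtain ⟨w, hw, hpath⟩ : ∃ w < s, IsPathFrom a w δ := by
        have := edgeIdx_le a (s - 2)
        rcases hδ with hδ | hδ
        exacts [⟨_, by omega, hδ⟩, ⟨_, by omega, hδ⟩]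
      obtain ⟨t, rfl⟩ := hpath.exists_eq_cons
      rw [pathLeftSet_cons_cons]
      refine Finset.union_subset ((stepLeft_subset_Ioc a s w).trans ?_)
        ((ih w hw hpath).trans (Finset.range_subset_range.2 hw.le))
      intro x
      simp only [Finset.mem_Ioc, Finset.mem_range]
      omega

lemma prod_pathLeftSet_cons {w : ℕ} (u : ℕ) (h : IsPathFrom a w γ) :
    ∏ i ∈ pathLeftSet a (u :: γ), (X i : MvPolynomial ℕ ℤ) =
      (∏ i ∈ stepLeft a u w, X i) * ∏ i ∈ pathLeftSet a γ, X i := by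
  obtain ⟨t, rfl⟩ := h.exists_eq_cons
  rw [pathLeftSet_cons_cons]
  refine Finset.prod_union (Finset.disjoint_left.2 fun x hx₁ hx₂ => ?_)
  have h₁ := stepLeft_subset_Ioc a u w hx₁
  have h₂ := pathLeftSet_subset_range h hx₂
  simp only [Finset.mem_Ioc, Finset.mem_range] at h₁ h₂
  omega

end Paths

def FpolyAt (a : List ℕ) (s : ℕ) : MvPolynomial ℕ ℤ :=
  ∑ᶠ γ ∈ {γ : List ℕ | IsPathFrom a s γ},
    ∏ i ∈ pathLeftSet a γ, (X i : MvPolynomial ℕ ℤ)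

lemma Fpoly_eq_FpolyAt (a : List ℕ) : Fpoly a = FpolyAt a a.sum := rfl

lemma FpolyAt_of_le_one (a : List ℕ) {s : ℕ} (hs : s ≤ 1) : FpolyAt a s = 1 := by
  have : {γ | IsPathFrom a s γ} = {[s]} := Set.ext fun γ => isPathFrom_iff_of_le_one hs
  rw [FpolyAt, this, finsum_mem_singleton]
  rfl

lemma FpolyAt_of_two_le (a : List ℕ) {s : ℕ} (hs : 2 ≤ s) :
    FpolyAt a s = FpolyAt a (edgeIdx a (s - 2)).1 +
      (∏ i ∈ Finset.Ioc ((edgeIdx a (s - 2)).2 - 1) (s - 1), (X i : MvPolynomial ℕ ℤ)) *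
        FpolyAt a (edgeIdx a (s - 2)).2 := by
  set e := edgeIdx a (s - 2)
  have hne : e.1 ≠ e.2 := edgeIdx_fst_ne_snd a _
  have hdisj : Disjoint {γ | IsPathFrom a e.1 γ} {γ | IsPathFrom a e.2 γ} :=
    Set.disjoint_left.2 fun _ h₁ h₂ => hne (Option.some.inj (h₁.1.symm.trans h₂.1))
  have hleft : stepLeft a s e.1 = ∅ := if_neg fun h => hne h.2
  have hright : stepLeft a s e.2 = Finset.Ioc (e.2 - 1) (s - 1) := if_pos ⟨hs, rfl⟩
  rw [FpolyAt, setOf_isPathFrom_of_two_le hs, finsum_mem_image List.cons_injective.injOn,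
    finsum_mem_union hdisj (setOf_isPathFrom_finite a _) (setOf_isPathFrom_finite a _),
    FpolyAt, FpolyAt, mul_finsum_mem]
  congr 1 <;> refine finsum_mem_congr rfl fun γ hγ => ?_
  · rw [prod_pathLeftSet_cons s hγ, hleft, Finset.prod_empty, one_mul]
  · rw [prod_pathLeftSet_cons s hγ, hright]

lemma FpolyAt_congr {a b : List ℕ} {s : ℕ}
    (h : ∀ i, i + 2 ≤ s → edgeIdx a i = edgeIdx b i) : FpolyAt a s = FpolyAt b s := by
  induction s using Nat.strong_induction_on with
  | _ s ih =>
    rcases le_or_gt s 1 with hs | hs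
    · rw [FpolyAt_of_le_one a hs, FpolyAt_of_le_one b hs]
    · have := edgeIdx_le a (s - 2)
      rw [FpolyAt_of_two_le a hs, FpolyAt_of_two_le b hs, ← h (s - 2) (by omega),
        ih _ (by omega) fun i hi => h i (by omega), ih _ (by omega) fun i hi => h i (by omega)]

lemma edgeIdx_congr {a b : List ℕ} {i : ℕ} (h : ∀ j ≤ i, fanIdx a j = fanIdx b j) :
    edgeIdx a i = edgeIdx b i := by
  induction i with
  | zero => rfl
  | succ n ih =>
    have hright : isRight a (n + 1) ↔ isRight b (n + 1) := by rw [isRight, isRight, h _ le_rfl]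
    rw [edgeIdx, edgeIdx, ih fun j hj => h j (by omega)]
    exact if_congr hright rfl rfl

lemma FpolyAt_congr_of_fanIdx {a b : List ℕ} {s : ℕ}
    (h : ∀ j, j + 2 ≤ s → fanIdx a j = fanIdx b j) : FpolyAt a s = FpolyAt b s :=
  FpolyAt_congr fun _ hi => edgeIdx_congr fun j hj => h j (by omega)

section Fans

variable {as : List ℕ} {j : ℕ}

lemma ell_append (l t : List ℕ) (k : ℕ) :
    ell (l ++ t) k = ell l k + ell t (k - l.length) := by
  rw [ell, ell, ell, List.take_append, List.sum_append]

lemma ell_of_length_le {l : List ℕ} {k : ℕ} (h : l.length ≤ k) : ell l k = l.sum := by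
  rw [ell, List.take_of_length_le h]

lemma ell_append_of_le_length (t : List ℕ) {k : ℕ} (h : k ≤ as.length) :
    ell (as ++ t) k = ell as k := by
  rw [ell_append, Nat.sub_eq_zero_of_le h]
  simp [ell]

lemma ell_le_sum (l : List ℕ) (k : ℕ) : ell l k ≤ l.sum := by
  conv_rhs => rw [← List.take_append_drop k l]
  rw [List.sum_append, ell]
  exact Nat.le_add_right _ _

lemma fanIdx_append_of_lt_sum (t : List ℕ) (hj : j < as.sum) :
    fanIdx (as ++ t) j = fanIdx as j := by
  unfold fanIdx
  congr 1
  ext k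
  simp only [Set.mem_ofPred_eq]
  rcases le_or_gt k as.length with hk | hk
  · rw [ell_append_of_le_length t hk]
  · rw [ell_append, ell_of_length_le hk.le]
    omega

lemma fanIdx_append_cons_of_le_of_lt (t : List ℕ) {b : ℕ} (h₁ : as.sum ≤ j)
    (h₂ : j < as.sum + b) : fanIdx (as ++ b :: t) j = as.length + 1 := by
  have hmem : as.length + 1 ∈ {k | j < ell (as ++ b :: t) k} := by
    simp only [Set.mem_ofPred_eq, ell_append, ell_of_length_le (Nat.le_succ _)]
    simpa [ell] using h₂
  refine le_antisymm (Nat.sInf_le hmem) (le_csInf ⟨_, hmem⟩ fun k hk => ?_)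
  by_contra! hlt
  have := ell_le_sum as k
  rw [Set.mem_ofPred_eq, ell_append_of_le_length _ (by omega)] at hk
  omega

lemma fanIdx_append_cons_congr (t t' : List ℕ) {b c : ℕ} (hb : j < as.sum + b)
    (hc : j < as.sum + c) : fanIdx (as ++ b :: t) j = fanIdx (as ++ c :: t') j := by
  rcases lt_or_ge j as.sum with h | h
  · rw [fanIdx_append_of_lt_sum _ h, fanIdx_append_of_lt_sum _ h]
  · rw [fanIdx_append_cons_of_le_of_lt t h hb, fanIdx_append_cons_of_le_of_lt t' h hc]

lemma isRight_append_cons_iff (t : List ℕ) {b : ℕ} (h₁ : as.sum ≤ j)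
    (h₂ : j < as.sum + b) : isRight (as ++ b :: t) j ↔ Odd (as.length + 1) := by
  rw [isRight, fanIdx_append_cons_of_le_of_lt t h₁ h₂]

end Fans

lemma edgeIdx_fst_eq_of_isRight {a : List ℕ} {c i : ℕ} (hci : c ≤ i)
    (h : ∀ j, c < j → j ≤ i → isRight a j) : (edgeIdx a i).1 = (edgeIdx a c).1 := by
  induction i, hci using Nat.le_induction with
  | base => rfl
  | succ n hn ih =>
    rw [edgeIdx, if_pos (h (n + 1) (by omega) le_rfl)]
    exact ih fun j h₁ h₂ => h j h₁ (by omega)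

lemma edgeIdx_snd_eq_of_not_isRight {a : List ℕ} {c i : ℕ} (hci : c ≤ i)
    (h : ∀ j, c < j → j ≤ i → ¬ isRight a j) : (edgeIdx a i).2 = (edgeIdx a c).2 := by
  induction i, hci using Nat.le_induction with
  | base => rfl
  | succ n hn ih =>
    rw [edgeIdx, if_neg (h (n + 1) (by omega) le_rfl)]
    exact ih fun j h₁ h₂ => h j h₁ (by omega)

lemma edgeIdx_snd_of_isRight {a : List ℕ} {i : ℕ} (h : isRight a i) :
    (edgeIdx a i).2 = i + 1 := by
  cases i with
  | zero => rfl
  | succ k => rw [edgeIdx, if_pos h]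

lemma edgeIdx_fst_of_not_isRight {a : List ℕ} {i : ℕ} (hi : 1 ≤ i) (h : ¬ isRight a i) :
    (edgeIdx a i).1 = i + 1 := by
  obtain ⟨k, rfl⟩ := Nat.exists_eq_add_of_le' hi
  rw [edgeIdx, if_neg h]

lemma edgeIdx_top_of_odd {as : List ℕ} {an : ℕ} (hpos : ∀ x ∈ as, 0 < x) (han : 2 ≤ an)
    (hodd : Odd (as.length + 1)) :
    edgeIdx (as ++ [an]) (as.sum + an - 2) = (as.sum, as.sum + an - 1) := by
  have hright : ∀ j, as.sum ≤ j → j < as.sum + an → isRight (as ++ [an]) j :=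
    fun j h₁ h₂ => (isRight_append_cons_iff [] h₁ h₂).2 hodd
  have hstart : (edgeIdx (as ++ [an]) (as.sum - 1)).1 = as.sum := by
    rcases as.eq_nil_or_concat with rfl | ⟨bs, b, rfl⟩
    · rfl
    simp only [List.concat_eq_append, List.mem_append, List.mem_singleton] at hpos hodd ⊢
    have hbs : bs ≠ [] := by rintro rfl; simp [Nat.odd_iff] at hodd
    have hb := hpos b (Or.inr rfl)
    have hc := hpos _ (Or.inl (List.head_mem hbs))
    have hsum : bs.head hbs ≤ bs.sum := List.le_sum_of_mem (List.head_mem hbs)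
    have hleft : ¬ isRight (bs ++ b :: [an]) (bs.sum + b - 1) := by
      rw [isRight_append_cons_iff _ (by omega) (by omega)]
      simpa [Nat.odd_add_one, parity_simps] using hodd
    rw [List.sum_append, List.sum_singleton, List.append_assoc, List.singleton_append,
      edgeIdx_fst_of_not_isRight (by omega) hleft]
    omega
  refine Prod.ext ?_ ?_
  · rw [edgeIdx_fst_eq_of_isRight (c := as.sum - 1) (by omega)
      fun j h₁ h₂ => hright j (by omega) (by omega), hstart]
  · rw [edgeIdx_snd_of_isRight (hright _ (by omega) (by omega))]
    omega

lemma edgeIdx_top_of_even {as : List ℕ} {an : ℕ} (hpos : ∀ x ∈ as, 0 < x) (han : 2 ≤ an)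
    (heven : Even (as.length + 1)) :
    edgeIdx (as ++ [an]) (as.sum + an - 2) = (as.sum + an - 1, as.sum) := by
  have hleft : ∀ j, as.sum ≤ j → j < as.sum + an → ¬ isRight (as ++ [an]) j :=
    fun j h₁ h₂ => by
      rw [isRight_append_cons_iff [] h₁ h₂]
      exact Nat.not_odd_iff_even.2 heven
  obtain ⟨bs, b, rfl⟩ := (as.eq_nil_or_concat).resolve_left (by rintro rfl; simp at heven)
  simp only [List.concat_eq_append, List.mem_append, List.mem_singleton] at hpos heven hleft ⊢
  have hb := hpos b (Or.inr rfl)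
  have hstart : (edgeIdx (bs ++ [b] ++ [an]) ((bs ++ [b]).sum - 1)).2 = (bs ++ [b]).sum := by
    have hright : isRight (bs ++ b :: [an]) (bs.sum + b - 1) := by
      rw [isRight_append_cons_iff _ (by omega) (by omega)]
      simpa [Nat.even_add_one, parity_simps] using heven
    rw [List.sum_append, List.sum_singleton, List.append_assoc, List.singleton_append,
      edgeIdx_snd_of_isRight hright]
    omega
  refine Prod.ext ?_ ?_
  · rw [edgeIdx_fst_of_not_isRight (by simp; omega) (hleft _ (by omega) (by omega))]
    omega
  · rw [edgeIdx_snd_eq_of_not_isRight (c := (bs ++ [b]).sum - 1) (by omega)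
      fun j h₁ h₂ => hleft j (by omega) (by omega), hstart]

lemma FpolyAt_append_sum (as t : List ℕ) : FpolyAt (as ++ t) as.sum = Fpoly as :=
  FpolyAt_congr_of_fanIdx fun _ hj => fanIdx_append_of_lt_sum t (by omega)

lemma Fpoly_append_singleton (as : List ℕ) (b : ℕ) :
    Fpoly (as ++ [b]) = FpolyAt (as ++ [b]) (as.sum + b) := by
  rw [Fpoly_eq_FpolyAt, List.sum_append, List.sum_singleton]

lemma Fpoly_append_pred_one {as : List ℕ} {an : ℕ} (han : 0 < an) :
    Fpoly (as ++ [an - 1, 1]) = Fpoly (as ++ [an]) := by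
  rw [Fpoly_eq_FpolyAt, Fpoly_append_singleton, List.sum_append, List.sum_pair,
    Nat.sub_add_cancel han]
  exact FpolyAt_congr_of_fanIdx fun j hj => fanIdx_append_cons_congr _ _ (by omega) (by omega)

lemma FpolyAt_append_singleton_pred {as : List ℕ} {an : ℕ} (han : 0 < an) :
    FpolyAt (as ++ [an]) (as.sum + an - 1) = Fpoly (as ++ [an - 1]) := by
  rw [Fpoly_append_singleton, ← Nat.add_sub_assoc han]
  exact FpolyAt_congr_of_fanIdx fun j hj => fanIdx_append_cons_congr _ _ (by omega) (by omega)

theorem F_polynomial_recursion_general (as : List ℕ) (an : ℕ)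
    (hpos : ∀ x ∈ as, 0 < x) :
    (2 ≤ an → Fpoly (as ++ [an - 1, 1]) = Fpoly (as ++ [an])) ∧
    (2 ≤ an → Odd (as.length + 1) →
      Fpoly (as ++ [an]) =
        Fpoly as +
          MvPolynomial.X ((as ++ [an]).sum - 1) * Fpoly (as ++ [an - 1])) ∧
    (2 ≤ an → Even (as.length + 1) →
      Fpoly (as ++ [an]) =
        (∏ i ∈ Finset.Icc as.sum ((as ++ [an]).sum - 1),
            (MvPolynomial.X i : MvPolynomial ℕ ℤ)) * Fpoly as +
          Fpoly (as ++ [an - 1])) := by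
  refine ⟨fun h2 => Fpoly_append_pred_one (by omega), fun h2 hodd => ?_, fun h2 heven => ?_⟩
  · have hIoc : Finset.Ioc (as.sum + an - 1 - 1) (as.sum + an - 1) = {as.sum + an - 1} := by
      ext; simp only [Finset.mem_Ioc, Finset.mem_singleton]; omega
    rw [Fpoly_append_singleton, FpolyAt_of_two_le _ (by omega), edgeIdx_top_of_odd hpos h2 hodd,
      FpolyAt_append_sum, FpolyAt_append_singleton_pred (by omega), hIoc, Finset.prod_singleton,
      List.sum_append, List.sum_singleton]
  · have hne : as ≠ [] := by rintro rfl; simp at heven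
    have hL : 0 < as.sum := List.sum_pos_iff_exists_pos_nat.2
      ⟨_, List.head_mem hne, hpos _ (List.head_mem hne)⟩
    have hIoc :
        Finset.Ioc (as.sum - 1) (as.sum + an - 1) = Finset.Icc as.sum (as.sum + an - 1) := by
      ext; simp only [Finset.mem_Ioc, Finset.mem_Icc]; omega
    rw [Fpoly_append_singleton, FpolyAt_of_two_le _ (by omega), edgeIdx_top_of_even hpos h2 heven,
      FpolyAt_append_sum, FpolyAt_append_singleton_pred (by omega), hIoc, add_comm,
      List.sum_append, List.sum_singleton]

/-- **Corollary (recursions of F-polynomials).**  Write `F[a₁,…,aₙ]` for the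
`F`-polynomial `F_{p/q}` when `p/q = [a₁,…,aₙ]`, with `N = a₁ + ⋯ + aₙ − 1` and
`l_k = a₁ + ⋯ + a_k`.  Then (i) `F[a₁,…,a_{n−1}, aₙ − 1, 1] = F[a₁,…,aₙ]`; and (ii) if
`aₙ ≥ 2`, `F[a₁,…,aₙ] = F[a₁,…,a_{n−1}] + y_N · F[a₁,…,a_{n−1}, aₙ − 1]` if `n` is odd,
and `F[a₁,…,aₙ] = (∏_{i=l_{n−1}}^{N} y_i) · F[a₁,…,a_{n−1}] + F[a₁,…,a_{n−1}, aₙ − 1]`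
if `n` is even.  (Here the list of the first `n − 1` entries is `as`, and `aₙ = an`.) -/
theorem F_polynomial_recursion (as : List ℕ) (an : ℕ)
    (hpos : ∀ x ∈ as, 0 < x) (han : 0 < an) :
    (2 ≤ an → Fpoly (as ++ [an - 1, 1]) = Fpoly (as ++ [an])) ∧
    (2 ≤ an → Odd (as.length + 1) →
      Fpoly (as ++ [an]) =
        Fpoly as +
          MvPolynomial.X ((as ++ [an]).sum - 1) * Fpoly (as ++ [an - 1])) ∧
    (2 ≤ an → Even (as.length + 1) →
      Fpoly (as ++ [an]) =
        (∏ i ∈ Finset.Icc as.sum ((as ++ [an]).sum - 1),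
            (MvPolynomial.X i : MvPolynomial ℕ ℤ)) * Fpoly as +
          Fpoly (as ++ [an - 1])) :=
  F_polynomial_recursion_general as an hpos

end TwoBridge

end
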